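/- arXiv:2303.16420 — 4 statements merged into one kernel-verified Lean document; each statement's English description precedes it below -/
import Mathlib

section
/- Let u : T → [0,1] be continuous, componentwise non-decreasing (u(x,y) ≤ u(x′,y′) whenever x ≤ x′ and y ≤ y′), normalized by u(x₁,y₁) = 0 and u(x_{N₁},y_{N₂}) = 1, and satisfy the conservative property. Suppose moreover that for given real coefficients a^l_{i,j} and constants c_l (l = 1,…,M) one has Σ_{i=1}^{N₁} Σ_{j=1}^{N₂} a^l_{i,j} u(x_i,y_j) ≤ c_l for every l. Let u_N be the Type-1 piecewise linear function built from the grid values u_{i,j} := u(x_i,y_j). Then u_N is continuous on T, componentwise non-decreasing, takes values in [0,1], satisfies u_N(x₁,y₁) = 0 and u_N(x_{N₁},y_{N₂}) = 1, satisfies the conservative property, and satisfies Σ_{i,j} a^l_{i,j} u_N(x_i,y_j) ≤ c_l for every l = 1,…,M. (Proposition 3.1 of the paper, in the case where each ψ_l is a simple function constant on the cells, so that the Lebesgue–Stieltjes constraint ∫_T u dψ_l ≤ c_l reduces to the displayed linear inequality in gridpoint values.) -/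
/-!
In the local coordinates `s = (p - x i) / (x (i+1) - x i)` and `t = (q - y j) / (y (j+1) - y j)`
of a cell, both triangle pieces of the Type-1 interpolant are given by the single formula
`u₀₀ + s (u₁₀ - u₀₀) + t (u₀₁ - u₀₀) + (u₀₀ + u₁₁ - u₁₀ - u₀₁) min s t`,
and on a shared edge of two cells the two formulas agree. This formula is continuous, is
nondecreasing in each variable when the corner values are, and is submodular because `min` is
supermodular and the conservative property of `u` gives `u₀₀ + u₁₁ ≤ u₀₁ + u₁₀`. Monotonicity
and submodularity pass from the cells to the whole rectangle along the grid lines; the range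
follows from monotonicity, and since the interpolant reproduces the grid values of `u`, the
normalisation and the gridpoint constraints are inherited verbatim.
-/

open Finset Set
open scoped Classical

noncomputable section

/-- Lower-triangle linear piece of the Type-1 PLA over cell `(i,j)`. -/
def u1l (x y : ℕ → ℝ) (u : ℕ → ℕ → ℝ) (i j : ℕ) (p q : ℝ) : ℝ :=
  ((x (i + 1) - p) / (x (i + 1) - x i)) * u i j
    + ((p - x i) / (x (i + 1) - x i) - (q - y j) / (y (j + 1) - y j)) * u (i + 1) j
    + ((q - y j) / (y (j + 1) - y j)) * u (i + 1) (j + 1)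

/-- Upper-triangle linear piece of the Type-1 PLA over cell `(i,j)`. -/
def u1u (x y : ℕ → ℝ) (u : ℕ → ℕ → ℝ) (i j : ℕ) (p q : ℝ) : ℝ :=
  ((y (j + 1) - q) / (y (j + 1) - y j)) * u i j
    + ((q - y j) / (y (j + 1) - y j) - (p - x i) / (x (i + 1) - x i)) * u i (j + 1)
    + ((p - x i) / (x (i + 1) - x i)) * u (i + 1) (j + 1)

/-- Membership in the half-open interval `X_i` (closed at the left end for `i = 1`). -/
def memX (x : ℕ → ℝ) (i : ℕ) (p : ℝ) : Prop :=
  if i = 1 then x 1 ≤ p ∧ p ≤ x 2 else x i < p ∧ p ≤ x (i + 1)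

/-- Membership in the cell `T_{i,j} = X_i × Y_j`. -/
def memCell (x y : ℕ → ℝ) (i j : ℕ) (p q : ℝ) : Prop :=
  memX x i p ∧ memX y j q

/-- The Type-1 piecewise linear function built from the grid values `u i j`. -/
def uPL (N₁ N₂ : ℕ) (x y : ℕ → ℝ) (u : ℕ → ℕ → ℝ) (p q : ℝ) : ℝ :=
  ∑ i ∈ Finset.Icc 1 (N₁ - 1), ∑ j ∈ Finset.Icc 1 (N₂ - 1),
    if memCell x y i j p q then
      (if (q - y j) * (x (i + 1) - x i) ≤ (p - x i) * (y (j + 1) - y j)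
        then u1l x y u i j p q else u1u x y u i j p q)
    else 0

section SquareInterp

variable {u₀₀ u₁₀ u₀₁ u₁₁ s s' t t' : ℝ}

def squareInterp (u₀₀ u₁₀ u₀₁ u₁₁ s t : ℝ) : ℝ :=
  u₀₀ + s * (u₁₀ - u₀₀) + t * (u₀₁ - u₀₀) + (u₀₀ + u₁₁ - u₁₀ - u₀₁) * min s t

lemma squareInterp_swap :
    squareInterp u₀₀ u₁₀ u₀₁ u₁₁ s t = squareInterp u₀₀ u₀₁ u₁₀ u₁₁ t s := by
  simp only [squareInterp, min_comm s t]
  ring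

lemma squareInterp_zero_left (ht : 0 ≤ t) :
    squareInterp u₀₀ u₁₀ u₀₁ u₁₁ 0 t = u₀₀ + t * (u₀₁ - u₀₀) := by
  simp [squareInterp, min_eq_left ht]

lemma squareInterp_one_left (ht : t ≤ 1) :
    squareInterp u₀₀ u₁₀ u₀₁ u₁₁ 1 t = u₁₀ + t * (u₁₁ - u₁₀) := by
  simp only [squareInterp, min_eq_right ht]
  ring

lemma squareInterp_zero_right (hs : 0 ≤ s) :
    squareInterp u₀₀ u₁₀ u₀₁ u₁₁ s 0 = u₀₀ + s * (u₁₀ - u₀₀) := by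
  rw [squareInterp_swap, squareInterp_zero_left hs]

lemma squareInterp_one_right (hs : s ≤ 1) :
    squareInterp u₀₀ u₁₀ u₀₁ u₁₁ s 1 = u₀₁ + s * (u₁₁ - u₀₁) := by
  rw [squareInterp_swap, squareInterp_one_left hs]

lemma squareInterp_mono_left (h₀ : u₀₀ ≤ u₁₀) (h₁ : u₀₁ ≤ u₁₁) (hs : s ≤ s') :
    squareInterp u₀₀ u₁₀ u₀₁ u₁₁ s t ≤ squareInterp u₀₀ u₁₀ u₀₁ u₁₁ s' t := by
  simp only [squareInterp]
  rcases le_total s t with h | h <;> rcases le_total s' t with h' | h' <;>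
    simp only [min_eq_left, min_eq_right, h, h'] <;> nlinarith

lemma squareInterp_mono_right (h₀ : u₀₀ ≤ u₀₁) (h₁ : u₁₀ ≤ u₁₁) (ht : t ≤ t') :
    squareInterp u₀₀ u₁₀ u₀₁ u₁₁ s t ≤ squareInterp u₀₀ u₁₀ u₀₁ u₁₁ s t' := by
  simpa only [squareInterp_swap (s := s)] using squareInterp_mono_left h₀ h₁ ht

lemma min_add_min_le_min_add_min (hs : s ≤ s') (ht : t ≤ t') :
    min s t' + min s' t ≤ min s t + min s' t' := by
  simp only [min_def]
  split_ifs <;> linarith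

lemma squareInterp_submodular (h : u₀₀ + u₁₁ ≤ u₀₁ + u₁₀) (hs : s ≤ s') (ht : t ≤ t') :
    squareInterp u₀₀ u₁₀ u₀₁ u₁₁ s t + squareInterp u₀₀ u₁₀ u₀₁ u₁₁ s' t' ≤
      squareInterp u₀₀ u₁₀ u₀₁ u₁₁ s t' + squareInterp u₀₀ u₁₀ u₀₁ u₁₁ s' t := by
  simp only [squareInterp]
  nlinarith [mul_le_mul_of_nonpos_left (min_add_min_le_min_add_min hs ht)
    (by linarith : u₀₀ + u₁₁ - u₁₀ - u₀₁ ≤ 0)]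

end SquareInterp

section Grid

variable {N i j : ℕ} {x : ℕ → ℝ} {p : ℝ}

def localCoord (x : ℕ → ℝ) (i : ℕ) (p : ℝ) : ℝ :=
  (p - x i) / (x (i + 1) - x i)

lemma localCoord_self : localCoord x i (x i) = 0 := by
  simp [localCoord]

lemma localCoord_succ (h : x i < x (i + 1)) : localCoord x i (x (i + 1)) = 1 :=
  div_self (sub_pos.2 h).ne'

lemma localCoord_mono (h : x i < x (i + 1)) : Monotone (localCoord x i) := fun _ _ hp =>
  div_le_div_of_nonneg_right (sub_le_sub_right hp _) (sub_pos.2 h).le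

lemma localCoord_mem_Icc (h : x i < x (i + 1)) (hp : p ∈ Set.Icc (x i) (x (i + 1))) :
    localCoord x i p ∈ Set.Icc 0 1 :=
  ⟨localCoord_self (x := x) ▸ localCoord_mono h hp.1, localCoord_succ h ▸ localCoord_mono h hp.2⟩

lemma grid_le (hx : ∀ i, 1 ≤ i → i < N → x i < x (i + 1)) (hi : 1 ≤ i) (hij : i ≤ j)
    (hj : j ≤ N) : x i ≤ x j := by
  induction j, hij using Nat.le_induction with
  | base => exact le_rfl
  | succ k hik ih => exact (ih (by omega)).trans (hx k (by omega) (by omega)).le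

lemma grid_mem_Icc (hx : ∀ i, 1 ≤ i → i < N → x i < x (i + 1)) (hi : 1 ≤ i) (hiN : i ≤ N) :
    x i ∈ Set.Icc (x 1) (x N) :=
  ⟨grid_le hx le_rfl hi hiN, grid_le hx hi hiN le_rfl⟩

lemma memX.mem_Icc (h : memX x i p) : p ∈ Set.Icc (x i) (x (i + 1)) := by
  unfold memX at h
  split_ifs at h with hi
  · subst hi
    exact h
  · exact ⟨h.1.le, h.2⟩

lemma memX_succ_self (h : x i < x (i + 1)) : memX x i (x (i + 1)) := by
  unfold memX
  split_ifs with hi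
  · subst hi
    exact ⟨h.le, le_rfl⟩
  · exact ⟨h, le_rfl⟩

lemma memX_or_eq_left (hi : 1 ≤ i) (hp : p ∈ Set.Icc (x i) (x (i + 1))) :
    memX x i p ∨ (2 ≤ i ∧ p = x i) := by
  unfold memX
  split_ifs with hi1
  · subst hi1
    exact Or.inl hp
  · rcases hp.1.lt_or_eq with h | h
    · exact Or.inl ⟨h, hp.2⟩
    · exact Or.inr ⟨by omega, h.symm⟩

lemma exists_memX (hN : 2 ≤ N) (hp : p ∈ Set.Icc (x 1) (x N)) :
    ∃ i, 1 ≤ i ∧ i < N ∧ memX x i p := by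
  induction N, hN using Nat.le_induction with
  | base => exact ⟨1, le_rfl, by norm_num, by simpa [memX] using hp⟩
  | succ N hN ih =>
    by_cases h : p ≤ x N
    · obtain ⟨i, hi, hiN, hpi⟩ := ih ⟨hp.1, h⟩
      exact ⟨i, hi, by omega, hpi⟩
    · refine ⟨N, by omega, by omega, ?_⟩
      rw [memX, if_neg (by omega)]
      exact ⟨not_le.1 h, hp.2⟩

lemma exists_mem_Icc_grid (hN : 2 ≤ N) (hp : p ∈ Set.Icc (x 1) (x N)) :
    ∃ i, 1 ≤ i ∧ i < N ∧ p ∈ Set.Icc (x i) (x (i + 1)) :=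
  let ⟨i, hi, hiN, hpi⟩ := exists_memX hN hp
  ⟨i, hi, hiN, hpi.mem_Icc⟩

lemma memX_unique (hx : ∀ i, 1 ≤ i → i < N → x i < x (i + 1)) (hi : 1 ≤ i) (hiN : i < N)
    (hj : 1 ≤ j) (hjN : j < N) (hpi : memX x i p) (hpj : memX x j p) : i = j := by
  by_contra hne
  wlog hij : i < j generalizing i j with H
  · exact H hj hjN hi hiN hpj hpi (Ne.symm hne) (by omega)
  have hpj' : x j < p := by
    rw [memX, if_neg (by omega)] at hpj
    exact hpj.1
  linarith [hpi.mem_Icc.2, grid_le hx (by omega : 1 ≤ i + 1) hij hjN.le]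

lemma monotoneOn_Icc_of_grid (hx : ∀ i, 1 ≤ i → i < N → x i < x (i + 1)) (hN : 1 ≤ N)
    {f : ℝ → ℝ} (h : ∀ i, 1 ≤ i → i < N → MonotoneOn f (Set.Icc (x i) (x (i + 1)))) :
    MonotoneOn f (Set.Icc (x 1) (x N)) := by
  induction N, hN using Nat.le_induction with
  | base => exact (subsingleton_Icc_of_ge le_rfl).monotoneOn f
  | succ N hN ih =>
    have h₁ : x 1 ≤ x N := grid_le hx le_rfl hN (by omega)
    have h₂ : x N ≤ x (N + 1) := (hx N hN (by omega)).le
    rw [← Icc_union_Icc_eq_Icc h₁ h₂]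
    exact (ih (fun i hi hiN => hx i hi (by omega)) fun i hi hiN => h i hi (by omega)).union_right
      (h N hN (by omega)) (isGreatest_Icc h₁) (isLeast_Icc h₂)

end Grid

section Interp

variable {N₁ N₂ i j k l : ℕ} {x y : ℕ → ℝ} {u : ℕ → ℕ → ℝ} {p q : ℝ}

def cellInterp (x y : ℕ → ℝ) (u : ℕ → ℕ → ℝ) (i j : ℕ) (p q : ℝ) : ℝ :=
  squareInterp (u i j) (u (i + 1) j) (u i (j + 1)) (u (i + 1) (j + 1))
    (localCoord x i p) (localCoord y j q)

lemma u1l_eq_cellInterp (hx : x i < x (i + 1)) (hts : localCoord y j q ≤ localCoord x i p) :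
    u1l x y u i j p q = cellInterp x y u i j p q := by
  have := (sub_pos.2 hx).ne'
  rw [cellInterp, squareInterp, min_eq_right hts]
  unfold u1l localCoord
  field_simp
  ring

lemma u1u_eq_cellInterp (hy : y j < y (j + 1)) (hst : localCoord x i p ≤ localCoord y j q) :
    u1u x y u i j p q = cellInterp x y u i j p q := by
  have := (sub_pos.2 hy).ne'
  rw [cellInterp, squareInterp, min_eq_left hst]
  unfold u1u localCoord
  field_simp
  ring

lemma cellInterp_succ_fst (hx : x i < x (i + 1)) (hq : localCoord y j q ∈ Set.Icc 0 1) :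
    cellInterp x y u (i + 1) j (x (i + 1)) q = cellInterp x y u i j (x (i + 1)) q := by
  rw [cellInterp, cellInterp, localCoord_self, localCoord_succ hx, squareInterp_zero_left hq.1,
    squareInterp_one_left hq.2]

lemma cellInterp_succ_snd (hy : y j < y (j + 1)) (hp : localCoord x i p ∈ Set.Icc 0 1) :
    cellInterp x y u i (j + 1) p (y (j + 1)) = cellInterp x y u i j p (y (j + 1)) := by
  rw [cellInterp, cellInterp, localCoord_self, localCoord_succ hy, squareInterp_zero_right hp.1,
    squareInterp_one_right hp.2]

lemma cellInterp_node (hx : x k < x (k + 1)) (hy : y l < y (l + 1)) (hi : i = k ∨ i = k + 1)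
    (hj : j = l ∨ j = l + 1) : cellInterp x y u k l (x i) (y j) = u i j := by
  rcases hi with rfl | rfl <;> rcases hj with rfl | rfl <;>
    simp [cellInterp, squareInterp, localCoord_self, localCoord_succ, hx, hy]
  ring

lemma cellInterp_submodular (hx : x i < x (i + 1)) (hy : y j < y (j + 1))
    (hu : u i j + u (i + 1) (j + 1) ≤ u i (j + 1) + u (i + 1) j) {a b c d : ℝ} (hab : a ≤ b)
    (hcd : c ≤ d) :
    cellInterp x y u i j a c + cellInterp x y u i j b d ≤
      cellInterp x y u i j a d + cellInterp x y u i j b c :=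
  squareInterp_submodular hu (localCoord_mono hx hab) (localCoord_mono hy hcd)

lemma continuous_cellInterp : Continuous fun z : ℝ × ℝ => cellInterp x y u i j z.1 z.2 := by
  unfold cellInterp squareInterp localCoord
  fun_prop

end Interp

section PiecewiseLinear

variable {N₁ N₂ i j : ℕ} {x y : ℕ → ℝ} {u : ℕ → ℕ → ℝ} {p q : ℝ}

lemma uPL_eq_cellInterp_of_memCell (hx : ∀ i, 1 ≤ i → i < N₁ → x i < x (i + 1))
    (hy : ∀ j, 1 ≤ j → j < N₂ → y j < y (j + 1)) (hi : 1 ≤ i) (hiN : i < N₁) (hj : 1 ≤ j)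
    (hjN : j < N₂) (h : memCell x y i j p q) :
    uPL N₁ N₂ x y u p q = cellInterp x y u i j p q := by
  have hmem : ∀ {k N}, 1 ≤ k → k < N → k ∈ Finset.Icc 1 (N - 1) := fun _ _ => by
    simp only [Finset.mem_Icc]; omega
  have hbounds : ∀ {k N}, k ∈ Finset.Icc 1 (N - 1) → 1 ≤ k ∧ k < N := fun hk => by
    simp only [Finset.mem_Icc] at hk; omega
  rw [uPL, sum_eq_single_of_mem i (hmem hi hiN), sum_eq_single_of_mem j (hmem hj hjN), if_pos h]
  · have hx' := hx i hi hiN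
    have hy' := hy j hj hjN
    have hcond := div_le_div_iff₀ (a := q - y j) (c := p - x i) (sub_pos.2 hy') (sub_pos.2 hx')
    split_ifs with hts
    · exact u1l_eq_cellInterp hx' (hcond.2 hts)
    · exact u1u_eq_cellInterp hy' (not_le.1 (mt hcond.1 hts)).le
  · intro j' hj' hne
    rw [if_neg fun h' => hne (memX_unique hy (hbounds hj').1 (hbounds hj').2 hj hjN h'.2 h.2)]
  · intro i' hi' hne
    refine sum_eq_zero fun j' _ => if_neg fun h' => hne ?_
    exact memX_unique hx (hbounds hi').1 (hbounds hi').2 hi hiN h'.1 h.1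

lemma uPL_eq_cellInterp (hx : ∀ i, 1 ≤ i → i < N₁ → x i < x (i + 1))
    (hy : ∀ j, 1 ≤ j → j < N₂ → y j < y (j + 1)) (hi : 1 ≤ i) (hiN : i < N₁) (hj : 1 ≤ j)
    (hjN : j < N₂) (hp : p ∈ Set.Icc (x i) (x (i + 1))) (hq : q ∈ Set.Icc (y j) (y (j + 1))) :
    uPL N₁ N₂ x y u p q = cellInterp x y u i j p q := by
  have hrow : ∀ l, 1 ≤ l → l < N₂ → memX y l q →
      uPL N₁ N₂ x y u p q = cellInterp x y u i l p q := by
    intro l hl hlN hql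
    rcases memX_or_eq_left hi hp with hpi | ⟨hi2, rfl⟩
    · exact uPL_eq_cellInterp_of_memCell hx hy hi hiN hl hlN ⟨hpi, hql⟩
    · obtain ⟨k, rfl⟩ : ∃ k, i = k + 1 := ⟨i - 1, by omega⟩
      have hk := hx k (by omega) (by omega)
      rw [uPL_eq_cellInterp_of_memCell hx hy (by omega) (by omega) hl hlN ⟨memX_succ_self hk, hql⟩,
        cellInterp_succ_fst hk (localCoord_mem_Icc (hy l hl hlN) hql.mem_Icc)]
  rcases memX_or_eq_left hj hq with hqj | ⟨hj2, rfl⟩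
  · exact hrow j hj hjN hqj
  · obtain ⟨l, rfl⟩ : ∃ l, j = l + 1 := ⟨j - 1, by omega⟩
    have hl := hy l (by omega) (by omega)
    rw [hrow l (by omega) (by omega) (memX_succ_self hl),
      cellInterp_succ_snd hl (localCoord_mem_Icc (hx i hi hiN) hp)]

lemma uPL_node (hN₁ : 2 ≤ N₁) (hN₂ : 2 ≤ N₂) (hx : ∀ i, 1 ≤ i → i < N₁ → x i < x (i + 1))
    (hy : ∀ j, 1 ≤ j → j < N₂ → y j < y (j + 1)) (hi : 1 ≤ i) (hiN : i ≤ N₁) (hj : 1 ≤ j)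
    (hjN : j ≤ N₂) : uPL N₁ N₂ x y u (x i) (y j) = u i j := by
  obtain ⟨k, hk, hkN, hik⟩ : ∃ k, 1 ≤ k ∧ k < N₁ ∧ (i = k ∨ i = k + 1) :=
    ⟨min i (N₁ - 1), by omega, by omega, by omega⟩
  obtain ⟨l, hl, hlN, hjl⟩ : ∃ l, 1 ≤ l ∧ l < N₂ ∧ (j = l ∨ j = l + 1) :=
    ⟨min j (N₂ - 1), by omega, by omega, by omega⟩
  have hxk := hx k hk hkN
  have hyl := hy l hl hlN
  rw [uPL_eq_cellInterp hx hy hk hkN hl hlN (by rcases hik with rfl | rfl <;> simp [hxk.le])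
    (by rcases hjl with rfl | rfl <;> simp [hyl.le]), cellInterp_node hxk hyl hik hjl]

lemma uPL_continuousOn (hN₁ : 2 ≤ N₁) (hN₂ : 2 ≤ N₂)
    (hx : ∀ i, 1 ≤ i → i < N₁ → x i < x (i + 1)) (hy : ∀ j, 1 ≤ j → j < N₂ → y j < y (j + 1)) :
    ContinuousOn (fun z : ℝ × ℝ => uPL N₁ N₂ x y u z.1 z.2)
      (Set.Icc (x 1) (x N₁) ×ˢ Set.Icc (y 1) (y N₂)) := by
  let cell : (Finset.Ico 1 N₁ ×ˢ Finset.Ico 1 N₂ : Finset (ℕ × ℕ)) → Set (ℝ × ℝ) := fun ij =>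
    Set.Icc (x ij.1.1) (x (ij.1.1 + 1)) ×ˢ Set.Icc (y ij.1.2) (y (ij.1.2 + 1))
  refine ContinuousOn.mono ((locallyFinite_of_finite cell).continuousOn_iUnion
    (fun _ => isClosed_Icc.prod isClosed_Icc) fun ⟨(i, j), hij⟩ => ?_) ?_
  · simp only [Finset.mem_product, Finset.mem_Ico] at hij
    refine (continuous_cellInterp (x := x) (y := y) (u := u) (i := i) (j := j)).continuousOn.congr
      fun z hz => ?_
    exact uPL_eq_cellInterp hx hy hij.1.1 hij.1.2 hij.2.1 hij.2.2 hz.1 hz.2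
  · rintro ⟨p, q⟩ ⟨hp, hq⟩
    obtain ⟨i, hi, hiN, hpi⟩ := exists_mem_Icc_grid hN₁ hp
    obtain ⟨j, hj, hjN, hqj⟩ := exists_mem_Icc_grid hN₂ hq
    exact mem_iUnion.2 ⟨⟨(i, j), by simp only [Finset.mem_product, Finset.mem_Ico]; omega⟩,
      hpi, hqj⟩

lemma uPL_monotoneOn_fst (hN₁ : 1 ≤ N₁) (hN₂ : 2 ≤ N₂)
    (hx : ∀ i, 1 ≤ i → i < N₁ → x i < x (i + 1)) (hy : ∀ j, 1 ≤ j → j < N₂ → y j < y (j + 1))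
    (hu : ∀ i j, 1 ≤ i → i < N₁ → 1 ≤ j → j ≤ N₂ → u i j ≤ u (i + 1) j)
    (hq : q ∈ Set.Icc (y 1) (y N₂)) :
    MonotoneOn (fun p => uPL N₁ N₂ x y u p q) (Set.Icc (x 1) (x N₁)) := by
  obtain ⟨j, hj, hjN, hqj⟩ := exists_mem_Icc_grid hN₂ hq
  refine monotoneOn_Icc_of_grid hx hN₁ fun i hi hiN p hp p' hp' hpp' => ?_
  simp only [uPL_eq_cellInterp hx hy hi hiN hj hjN hp hqj,
    uPL_eq_cellInterp hx hy hi hiN hj hjN hp' hqj]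
  exact squareInterp_mono_left (hu i j hi hiN hj hjN.le) (hu i (j + 1) hi hiN (by omega) hjN)
    (localCoord_mono (hx i hi hiN) hpp')

lemma uPL_monotoneOn_snd (hN₁ : 2 ≤ N₁) (hN₂ : 1 ≤ N₂)
    (hx : ∀ i, 1 ≤ i → i < N₁ → x i < x (i + 1)) (hy : ∀ j, 1 ≤ j → j < N₂ → y j < y (j + 1))
    (hu : ∀ i j, 1 ≤ i → i ≤ N₁ → 1 ≤ j → j < N₂ → u i j ≤ u i (j + 1))
    (hp : p ∈ Set.Icc (x 1) (x N₁)) :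
    MonotoneOn (fun q => uPL N₁ N₂ x y u p q) (Set.Icc (y 1) (y N₂)) := by
  obtain ⟨i, hi, hiN, hpi⟩ := exists_mem_Icc_grid hN₁ hp
  refine monotoneOn_Icc_of_grid hy hN₂ fun j hj hjN q hq q' hq' hqq' => ?_
  simp only [uPL_eq_cellInterp hx hy hi hiN hj hjN hpi hq,
    uPL_eq_cellInterp hx hy hi hiN hj hjN hpi hq']
  exact squareInterp_mono_right (hu i j hi hiN.le hj hjN) (hu (i + 1) j (by omega) hiN hj hjN)
    (localCoord_mono (hy j hj hjN) hqq')

lemma uPL_monotone (hN₁ : 2 ≤ N₁) (hN₂ : 2 ≤ N₂)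
    (hx : ∀ i, 1 ≤ i → i < N₁ → x i < x (i + 1)) (hy : ∀ j, 1 ≤ j → j < N₂ → y j < y (j + 1))
    (hu₁ : ∀ i j, 1 ≤ i → i < N₁ → 1 ≤ j → j ≤ N₂ → u i j ≤ u (i + 1) j)
    (hu₂ : ∀ i j, 1 ≤ i → i ≤ N₁ → 1 ≤ j → j < N₂ → u i j ≤ u i (j + 1)) {p p' q q' : ℝ}
    (hp : p ∈ Set.Icc (x 1) (x N₁)) (hp' : p' ∈ Set.Icc (x 1) (x N₁))
    (hq : q ∈ Set.Icc (y 1) (y N₂)) (hq' : q' ∈ Set.Icc (y 1) (y N₂)) (hpp' : p ≤ p')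
    (hqq' : q ≤ q') : uPL N₁ N₂ x y u p q ≤ uPL N₁ N₂ x y u p' q' :=
  (uPL_monotoneOn_fst (by omega) hN₂ hx hy hu₁ hq hp hp' hpp').trans
    (uPL_monotoneOn_snd hN₁ (by omega) hx hy hu₂ hp' hq hq' hqq')

lemma uPL_submodular (hN₁ : 1 ≤ N₁) (hN₂ : 1 ≤ N₂)
    (hx : ∀ i, 1 ≤ i → i < N₁ → x i < x (i + 1)) (hy : ∀ j, 1 ≤ j → j < N₂ → y j < y (j + 1))
    (hu : ∀ i j, 1 ≤ i → i < N₁ → 1 ≤ j → j < N₂ →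
      u i j + u (i + 1) (j + 1) ≤ u i (j + 1) + u (i + 1) j)
    {a b c d : ℝ} (ha : x 1 ≤ a) (hab : a ≤ b) (hb : b ≤ x N₁) (hc : y 1 ≤ c) (hcd : c ≤ d)
    (hd : d ≤ y N₂) :
    uPL N₁ N₂ x y u a c + uPL N₁ N₂ x y u b d ≤ uPL N₁ N₂ x y u a d + uPL N₁ N₂ x y u b c := by
  set v := uPL N₁ N₂ x y u
  have hcol : ∀ i, 1 ≤ i → i < N₁ → ∀ a ∈ Set.Icc (x i) (x (i + 1)),
      ∀ b ∈ Set.Icc (x i) (x (i + 1)), a ≤ b →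
        MonotoneOn (fun t => v a t - v b t) (Set.Icc (y 1) (y N₂)) := by
    intro i hi hiN a ha b hb hab
    refine monotoneOn_Icc_of_grid hy hN₂ fun j hj hjN t ht t' ht' htt' => ?_
    have := cellInterp_submodular (u := u) (hx i hi hiN) (hy j hj hjN) (hu i j hi hiN hj hjN)
      hab htt'
    simp only [v, uPL_eq_cellInterp hx hy hi hiN hj hjN ha ht,
      uPL_eq_cellInterp hx hy hi hiN hj hjN ha ht', uPL_eq_cellInterp hx hy hi hiN hj hjN hb ht,
      uPL_eq_cellInterp hx hy hi hiN hj hjN hb ht']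
    linarith
  have hrow : MonotoneOn (fun s => v s c - v s d) (Set.Icc (x 1) (x N₁)) := by
    refine monotoneOn_Icc_of_grid hx hN₁ fun i hi hiN s hs s' hs' hss' => ?_
    have := hcol i hi hiN s hs s' hs' hss' ⟨hc, hcd.trans hd⟩ ⟨hc.trans hcd, hd⟩ hcd
    simp only at this ⊢
    linarith
  have := hrow ⟨ha, hab.trans hb⟩ ⟨ha.trans hab, hb⟩ hab
  simp only at this
  linarith

end PiecewiseLinear

theorem prop31_type1_PLA_preserves_properties_general
    (N₁ N₂ M : ℕ) (hN₁ : 2 ≤ N₁) (hN₂ : 2 ≤ N₂)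
    (x y : ℕ → ℝ)
    (hx : ∀ i, 1 ≤ i → i < N₁ → x i < x (i + 1))
    (hy : ∀ j, 1 ≤ j → j < N₂ → y j < y (j + 1))
    (u : ℝ → ℝ → ℝ)
    (hmono : ∀ p p' q q', p ∈ Set.Icc (x 1) (x N₁) → p' ∈ Set.Icc (x 1) (x N₁) →
      q ∈ Set.Icc (y 1) (y N₂) → q' ∈ Set.Icc (y 1) (y N₂) →
      p ≤ p' → q ≤ q' → u p q ≤ u p' q')
    (hnorm0 : u (x 1) (y 1) = 0) (hnorm1 : u (x N₁) (y N₂) = 1)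
    (hcons : ∀ a b c d : ℝ, x 1 ≤ a → a ≤ b → b ≤ x N₁ → y 1 ≤ c → c ≤ d → d ≤ y N₂ →
      u a c + u b d ≤ u a d + u b c)
    (a : ℕ → ℕ → ℕ → ℝ) (c : ℕ → ℝ)
    (hlin : ∀ l ∈ Finset.Icc 1 M,
      ∑ i ∈ Finset.Icc 1 N₁, ∑ j ∈ Finset.Icc 1 N₂, a l i j * u (x i) (y j) ≤ c l) :
    let uN := uPL N₁ N₂ x y (fun i j => u (x i) (y j))
    ContinuousOn (fun pq : ℝ × ℝ => uN pq.1 pq.2)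
        (Set.Icc (x 1) (x N₁) ×ˢ Set.Icc (y 1) (y N₂)) ∧
      (∀ p p' q q', p ∈ Set.Icc (x 1) (x N₁) → p' ∈ Set.Icc (x 1) (x N₁) →
        q ∈ Set.Icc (y 1) (y N₂) → q' ∈ Set.Icc (y 1) (y N₂) →
        p ≤ p' → q ≤ q' → uN p q ≤ uN p' q') ∧
      (∀ p ∈ Set.Icc (x 1) (x N₁), ∀ q ∈ Set.Icc (y 1) (y N₂),
        uN p q ∈ Set.Icc (0 : ℝ) 1) ∧
      uN (x 1) (y 1) = 0 ∧ uN (x N₁) (y N₂) = 1 ∧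
      (∀ a' b' c' d' : ℝ, x 1 ≤ a' → a' ≤ b' → b' ≤ x N₁ → y 1 ≤ c' → c' ≤ d' → d' ≤ y N₂ →
        uN a' c' + uN b' d' ≤ uN a' d' + uN b' c') ∧
      (∀ l ∈ Finset.Icc 1 M,
        ∑ i ∈ Finset.Icc 1 N₁, ∑ j ∈ Finset.Icc 1 N₂, a l i j * uN (x i) (y j) ≤ c l) := by
  intro uN
  have hxT : ∀ i, 1 ≤ i → i ≤ N₁ → x i ∈ Set.Icc (x 1) (x N₁) := fun _ => grid_mem_Icc hx
  have hyT : ∀ j, 1 ≤ j → j ≤ N₂ → y j ∈ Set.Icc (y 1) (y N₂) := fun _ => grid_mem_Icc hy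
  have hu₁ : ∀ i j, 1 ≤ i → i < N₁ → 1 ≤ j → j ≤ N₂ → u (x i) (y j) ≤ u (x (i + 1)) (y j) :=
    fun i j hi hiN hj hjN => hmono _ _ _ _ (hxT i hi hiN.le) (hxT (i + 1) (by omega) hiN)
      (hyT j hj hjN) (hyT j hj hjN) (hx i hi hiN).le le_rfl
  have hu₂ : ∀ i j, 1 ≤ i → i ≤ N₁ → 1 ≤ j → j < N₂ → u (x i) (y j) ≤ u (x i) (y (j + 1)) :=
    fun i j hi hiN hj hjN => hmono _ _ _ _ (hxT i hi hiN) (hxT i hi hiN)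
      (hyT j hj hjN.le) (hyT (j + 1) (by omega) hjN) le_rfl (hy j hj hjN).le
  have hu : ∀ i j, 1 ≤ i → i < N₁ → 1 ≤ j → j < N₂ →
      u (x i) (y j) + u (x (i + 1)) (y (j + 1)) ≤ u (x i) (y (j + 1)) + u (x (i + 1)) (y j) :=
    fun i j hi hiN hj hjN => hcons _ _ _ _ (hxT i hi hiN.le).1 (hx i hi hiN).le
      (hxT (i + 1) (by omega) hiN).2 (hyT j hj hjN.le).1 (hy j hj hjN).le
      (hyT (j + 1) (by omega) hjN).2
  have hnode : ∀ i j, 1 ≤ i → i ≤ N₁ → 1 ≤ j → j ≤ N₂ → uN (x i) (y j) = u (x i) (y j) :=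
    fun _ _ => uPL_node hN₁ hN₂ hx hy
  have h₀ : uN (x 1) (y 1) = 0 := (hnode 1 1 le_rfl (by omega) le_rfl (by omega)).trans hnorm0
  have h₁ : uN (x N₁) (y N₂) = 1 := (hnode N₁ N₂ (by omega) le_rfl (by omega) le_rfl).trans hnorm1
  refine ⟨uPL_continuousOn hN₁ hN₂ hx hy, fun _ _ _ _ => uPL_monotone hN₁ hN₂ hx hy hu₁ hu₂,
    fun p hp q hq => ⟨?_, ?_⟩, h₀, h₁, fun _ _ _ _ => uPL_submodular (by omega) (by omega) hx hy hu,
    fun l hl => le_of_eq_of_le (sum_congr rfl fun i hi => sum_congr rfl fun j hj => ?_) (hlin l hl)⟩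
  · exact h₀.symm.trans_le (uPL_monotone hN₁ hN₂ hx hy hu₁ hu₂ (hxT 1 le_rfl (by omega)) hp
      (hyT 1 le_rfl (by omega)) hq hp.1 hq.1)
  · exact (uPL_monotone hN₁ hN₂ hx hy hu₁ hu₂ hp (hxT N₁ (by omega) le_rfl) hq
      (hyT N₂ (by omega) le_rfl) hp.2 hq.2).trans_eq h₁
  · rw [Finset.mem_Icc] at hi hj
    rw [hnode i j hi.1 hi.2 hj.1 hj.2]

/-- Proposition 3.1 (simple-function case): the Type-1 PLA of a continuous, componentwise
non-decreasing, normalized utility with the conservative property, satisfying linear gridpoint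
constraints, inherits all of those properties. -/
theorem prop31_type1_PLA_preserves_properties
    (N₁ N₂ M : ℕ) (hN₁ : 2 ≤ N₁) (hN₂ : 2 ≤ N₂)
    (x y : ℕ → ℝ)
    (hx : ∀ i, 1 ≤ i → i < N₁ → x i < x (i + 1))
    (hy : ∀ j, 1 ≤ j → j < N₂ → y j < y (j + 1))
    (u : ℝ → ℝ → ℝ)
    (hcont : ContinuousOn (fun pq : ℝ × ℝ => u pq.1 pq.2)
      (Set.Icc (x 1) (x N₁) ×ˢ Set.Icc (y 1) (y N₂)))
    (hmono : ∀ p p' q q', p ∈ Set.Icc (x 1) (x N₁) → p' ∈ Set.Icc (x 1) (x N₁) →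
      q ∈ Set.Icc (y 1) (y N₂) → q' ∈ Set.Icc (y 1) (y N₂) →
      p ≤ p' → q ≤ q' → u p q ≤ u p' q')
    (hrange : ∀ p ∈ Set.Icc (x 1) (x N₁), ∀ q ∈ Set.Icc (y 1) (y N₂),
      u p q ∈ Set.Icc (0 : ℝ) 1)
    (hnorm0 : u (x 1) (y 1) = 0) (hnorm1 : u (x N₁) (y N₂) = 1)
    (hcons : ∀ a b c d : ℝ, x 1 ≤ a → a ≤ b → b ≤ x N₁ → y 1 ≤ c → c ≤ d → d ≤ y N₂ →
      u a c + u b d ≤ u a d + u b c)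
    (a : ℕ → ℕ → ℕ → ℝ) (c : ℕ → ℝ)
    (hlin : ∀ l ∈ Finset.Icc 1 M,
      ∑ i ∈ Finset.Icc 1 N₁, ∑ j ∈ Finset.Icc 1 N₂, a l i j * u (x i) (y j) ≤ c l) :
    let uN := uPL N₁ N₂ x y (fun i j => u (x i) (y j))
    ContinuousOn (fun pq : ℝ × ℝ => uN pq.1 pq.2)
        (Set.Icc (x 1) (x N₁) ×ˢ Set.Icc (y 1) (y N₂)) ∧
      (∀ p p' q q', p ∈ Set.Icc (x 1) (x N₁) → p' ∈ Set.Icc (x 1) (x N₁) →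
        q ∈ Set.Icc (y 1) (y N₂) → q' ∈ Set.Icc (y 1) (y N₂) →
        p ≤ p' → q ≤ q' → uN p q ≤ uN p' q') ∧
      (∀ p ∈ Set.Icc (x 1) (x N₁), ∀ q ∈ Set.Icc (y 1) (y N₂),
        uN p q ∈ Set.Icc (0 : ℝ) 1) ∧
      uN (x 1) (y 1) = 0 ∧ uN (x N₁) (y N₂) = 1 ∧
      (∀ a' b' c' d' : ℝ, x 1 ≤ a' → a' ≤ b' → b' ≤ x N₁ → y 1 ≤ c' → c' ≤ d' → d' ≤ y N₂ →
        uN a' c' + uN b' d' ≤ uN a' d' + uN b' c') ∧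
      (∀ l ∈ Finset.Icc 1 M,
        ∑ i ∈ Finset.Icc 1 N₁, ∑ j ∈ Finset.Icc 1 N₂, a l i j * uN (x i) (y j) ≤ c l) :=
  prop31_type1_PLA_preserves_properties_general N₁ N₂ M hN₁ hN₂ x y hx hy u hmono hnorm0 hnorm1
    hcons a c hlin
end
end

section
/- Fix a single cell [a,a′] × [b,b′] with a < a′ and b < b′ and corner values u₀₀ at (a,b), u₁₀ at (a′,b), u₀₁ at (a,b′), u₁₁ at (a′,b′). Define the Type-1 value v₁(x,y) on the cell by: v₁(x,y) := ((a′−x)/(a′−a))u₀₀ + ((x−a)/(a′−a) − (y−b)/(b′−b))u₁₀ + ((y−b)/(b′−b))u₁₁ if (y−b)(a′−a) ≤ (x−a)(b′−b), and v₁(x,y) := ((b′−y)/(b′−b))u₀₀ + ((y−b)/(b′−b) − (x−a)/(a′−a))u₀₁ + ((x−a)/(a′−a))u₁₁ otherwise. Define the Type-2 value v₂(x,y) by: v₂(x,y) := ((a′−x)/(a′−a))u₀₁ + ((x−a)/(a′−a) − (b′−y)/(b′−b))u₁₁ + ((b′−y)/(b′−b))u₁₀ if (b′−y)(a′−a) ≤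 (x−a)(b′−b), and v₂(x,y) := ((y−b)/(b′−b))u₀₁ + ((a′−x)/(a′−a) − (y−b)/(b′−b))u₀₀ + ((x−a)/(a′−a))u₁₀ otherwise. If the conservative condition u₀₁ + u₁₀ ≥ u₀₀ + u₁₁ holds, then v₂(x,y) ≥ v₁(x,y) for every (x,y) ∈ [a,a′] × [b,b′]; if instead u₀₁ + u₁₀ ≤ u₀₀ + u₁₁, then v₁(x,y) ≥ v₂(x,y) for every (x,y) in the cell. (This is the majorization claim illustrated in Figure 1(b)–(c) of the paper.) -/
/-!
In the cell coordinates `s = (x - a)/(a' - a)`, `t = (y - b)/(b' - b)` both interpolants differ from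
the bilinear interpolant `B(s, t)` of the corner values by a multiple of the twist
`δ = u₀₀ + u₁₁ - u₀₁ - u₁₀`: the Type-1 one by `+ min s t * (1 - max s t) * δ` and the Type-2 one by
`- min s (1 - t) * (1 - max s (1 - t)) * δ`. Both weights are nonnegative on the unit square, so
`v₁ - v₂` has the sign of `δ`.
-/

open scoped Classical

noncomputable section

/-- Type-1 (main-diagonal) piecewise linear interpolant of the four corner values over the cell
`[a,a'] × [b,b']`. -/
def type1Val (a a' b b' u00 u10 u01 u11 p q : ℝ) : ℝ :=
  if (q - b) * (a' - a) ≤ (p - a) * (b' - b) then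
    ((a' - p) / (a' - a)) * u00 + ((p - a) / (a' - a) - (q - b) / (b' - b)) * u10
      + ((q - b) / (b' - b)) * u11
  else
    ((b' - q) / (b' - b)) * u00 + ((q - b) / (b' - b) - (p - a) / (a' - a)) * u01
      + ((p - a) / (a' - a)) * u11

/-- Type-2 (counter-diagonal) piecewise linear interpolant of the four corner values over the
cell `[a,a'] × [b,b']`. -/
def type2Val (a a' b b' u00 u10 u01 u11 p q : ℝ) : ℝ :=
  if (b' - q) * (a' - a) ≤ (p - a) * (b' - b) then
    ((a' - p) / (a' - a)) * u01 + ((p - a) / (a' - a) - (b' - q) / (b' - b)) * u11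
      + ((b' - q) / (b' - b)) * u10
  else
    ((q - b) / (b' - b)) * u01 + ((a' - p) / (a' - a) - (q - b) / (b' - b)) * u00
      + ((p - a) / (a' - a)) * u10

def cellCoord (a a' p : ℝ) : ℝ := (p - a) / (a' - a)

def bilinearInterp (u00 u10 u01 u11 s t : ℝ) : ℝ :=
  (1 - s) * (1 - t) * u00 + s * (1 - t) * u10 + (1 - s) * t * u01 + s * t * u11

lemma sub_div_sub_eq_one_sub_cellCoord {a a' : ℝ} (h : a ≠ a') (p : ℝ) :
    (a' - p) / (a' - a) = 1 - cellCoord a a' p := by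
  rw [cellCoord, eq_sub_iff_add_eq, ← add_div, div_eq_one_iff_eq (sub_ne_zero.2 h.symm)]
  ring

lemma cellCoord_mem_Icc {a a' p : ℝ} (ha : a < a') (hp : p ∈ Set.Icc a a') :
    cellCoord a a' p ∈ Set.Icc 0 1 := by
  have hA : 0 < a' - a := sub_pos.2 ha
  exact ⟨div_nonneg (sub_nonneg.2 hp.1) hA.le,
    (div_le_one hA).2 (sub_le_sub_right hp.2 a)⟩

lemma min_mul_one_sub_max_nonneg {s t : ℝ} (hs : s ∈ Set.Icc (0 : ℝ) 1)
    (ht : t ∈ Set.Icc (0 : ℝ) 1) : 0 ≤ min s t * (1 - max s t) :=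
  mul_nonneg (le_min hs.1 ht.1) (sub_nonneg.2 (max_le hs.2 ht.2))

section Interpolants

variable {a a' b b' : ℝ} (u00 u10 u01 u11 p q : ℝ)

lemma type1Val_eq_bilinearInterp_add (ha : a < a') (hb : b < b') :
    type1Val a a' b b' u00 u10 u01 u11 p q =
      bilinearInterp u00 u10 u01 u11 (cellCoord a a' p) (cellCoord b b' q) +
        min (cellCoord a a' p) (cellCoord b b' q) *
          (1 - max (cellCoord a a' p) (cellCoord b b' q)) * (u00 + u11 - u01 - u10) := by
  have hcond : (q - b) * (a' - a) ≤ (p - a) * (b' - b) ↔ cellCoord b b' q ≤ cellCoord a a' p :=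
    (div_le_div_iff₀ (sub_pos.2 hb) (sub_pos.2 ha)).symm
  rw [type1Val, sub_div_sub_eq_one_sub_cellCoord ha.ne, sub_div_sub_eq_one_sub_cellCoord hb.ne]
  split_ifs with h <;> rw [hcond] at h
  · rw [min_eq_right h, max_eq_left h, bilinearInterp, cellCoord, cellCoord]; ring
  · rw [min_eq_left (not_le.1 h).le, max_eq_right (not_le.1 h).le, bilinearInterp, cellCoord,
      cellCoord]
    ring

lemma type2Val_eq_bilinearInterp_sub (ha : a < a') (hb : b < b') :
    type2Val a a' b b' u00 u10 u01 u11 p q =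
      bilinearInterp u00 u10 u01 u11 (cellCoord a a' p) (cellCoord b b' q) -
        min (cellCoord a a' p) (1 - cellCoord b b' q) *
          (1 - max (cellCoord a a' p) (1 - cellCoord b b' q)) * (u00 + u11 - u01 - u10) := by
  have hcond :
      (b' - q) * (a' - a) ≤ (p - a) * (b' - b) ↔ 1 - cellCoord b b' q ≤ cellCoord a a' p := by
    rw [← sub_div_sub_eq_one_sub_cellCoord hb.ne]
    exact (div_le_div_iff₀ (sub_pos.2 hb) (sub_pos.2 ha)).symm
  rw [type2Val, sub_div_sub_eq_one_sub_cellCoord ha.ne, sub_div_sub_eq_one_sub_cellCoord hb.ne]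
  split_ifs with h <;> rw [hcond] at h
  · rw [min_eq_right h, max_eq_left h, bilinearInterp, cellCoord, cellCoord]; ring
  · rw [min_eq_left (not_le.1 h).le, max_eq_right (not_le.1 h).le, bilinearInterp, cellCoord,
      cellCoord]
    ring

lemma type1Val_sub_type2Val (ha : a < a') (hb : b < b') :
    type1Val a a' b b' u00 u10 u01 u11 p q - type2Val a a' b b' u00 u10 u01 u11 p q =
      (min (cellCoord a a' p) (cellCoord b b' q) *
          (1 - max (cellCoord a a' p) (cellCoord b b' q)) +
        min (cellCoord a a' p) (1 - cellCoord b b' q) *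
          (1 - max (cellCoord a a' p) (1 - cellCoord b b' q))) * (u00 + u11 - u01 - u10) := by
  rw [type1Val_eq_bilinearInterp_add _ _ _ _ _ _ ha hb,
    type2Val_eq_bilinearInterp_sub _ _ _ _ _ _ ha hb]
  ring

end Interpolants

/-- Majorization between the Type-1 and Type-2 interpolants on a cell: under the conservative
condition the Type-2 interpolant majorizes the Type-1 one, and conversely when the condition is
reversed (Figure 1(b)–(c) of the paper). -/
theorem type2_majorizes_type1_iff_conservative
    (a a' b b' u00 u10 u01 u11 : ℝ) (ha : a < a') (hb : b < b')
    (p q : ℝ) (hp : p ∈ Set.Icc a a') (hq : q ∈ Set.Icc b b') :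
    (u00 + u11 ≤ u01 + u10 →
      type1Val a a' b b' u00 u10 u01 u11 p q ≤ type2Val a a' b b' u00 u10 u01 u11 p q) ∧
    (u01 + u10 ≤ u00 + u11 →
      type2Val a a' b b' u00 u10 u01 u11 p q ≤ type1Val a a' b b' u00 u10 u01 u11 p q) := by
  have hs := cellCoord_mem_Icc ha hp
  have ht := cellCoord_mem_Icc hb hq
  have ht_flip : 1 - cellCoord b b' q ∈ Set.Icc (0 : ℝ) 1 := ⟨by linarith [ht.2], by linarith [ht.1]⟩
  have hweight :=
    add_nonneg (min_mul_one_sub_max_nonneg hs ht) (min_mul_one_sub_max_nonneg hs ht_flip)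
  have hdiff := type1Val_sub_type2Val u00 u10 u01 u11 p q ha hb
  constructor
  · intro hδ
    have := mul_nonpos_of_nonneg_of_nonpos hweight (by linarith : u00 + u11 - u01 - u10 ≤ 0)
    linarith
  · intro hδ
    have := mul_nonneg hweight (by linarith : 0 ≤ u00 + u11 - u01 - u10)
    linarith

end
end

section
/- Let a̲ < ā and b̲ < b̄, and let F00, F10, F01, F11 ∈ ℝ. Define F : [a̲,ā] × [b̲,b̄] → ℝ as the continuous piecewise linear function with two linear pieces separated by the main diagonal from (a̲,b̲) to (ā,b̄): F(x,y) := ((ā−x)/(ā−a̲))F00 + ((x−a̲)/(ā−a̲) − (y−b̲)/(b̄−b̲))F10 + ((y−b̲)/(b̄−b̲))F11 when (y−b̲)(ā−a̲) ≤ (x−a̲)(b̄−b̲), and F(x,y) := ((b̄−y)/(b̄−b̲))F00 + ((y−b̲)/(b̄−b̲) − (x−a̲)/(ā−a̲))F01 + ((x−a̲)/(ā−a̲))F11 otherwise. Let y(x) := b̲ + (b̄−b̲)(x−a̲)/(ā−a̲) be the linear function representing the diagonal. Then for every subrectangle with a̲ ≤ a ≤ a′ ≤ ā and b̲ ≤ b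 ≤ b′ ≤ b̄, F(a′,b′) − F(a,b′) − F(a′,b) + F(a,b) = ((F11 − F01 − F10 + F00)/(ā−a̲)) · λ({x ∈ [a,a′] : b ≤ y(x) ≤ b′}), where λ denotes one-dimensional Lebesgue measure. (This is the content of Proposition 3.2 of the paper for indicator test functions: the Lebesgue–Stieltjes measure induced by a two-piece piecewise linear F is concentrated on the diagonal with uniform density in x.) -/
open scoped Classical

noncomputable section

/-- The two-piece piecewise linear function on `[alo, ahi] × [blo, bhi]` whose pieces are
separated by the main diagonal from `(alo, blo)` to `(ahi, bhi)`. -/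
def pwF (alo ahi blo bhi F00 F10 F01 F11 p q : ℝ) : ℝ :=
  if (q - blo) * (ahi - alo) ≤ (p - alo) * (bhi - blo) then
    ((ahi - p) / (ahi - alo)) * F00 + ((p - alo) / (ahi - alo) - (q - blo) / (bhi - blo)) * F10
      + ((q - blo) / (bhi - blo)) * F11
  else
    ((bhi - q) / (bhi - blo)) * F00 + ((q - blo) / (bhi - blo) - (p - alo) / (ahi - alo)) * F01
      + ((p - alo) / (ahi - alo)) * F11

/-- The linear function representing the main diagonal. -/
def diagLine (alo ahi blo bhi t : ℝ) : ℝ :=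
  blo + (bhi - blo) * (t - alo) / (ahi - alo)

/-! In the normalized coordinates `x = (p - alo) / (ahi - alo)`, `y = (q - blo) / (bhi - blo)`,
`F` is an affine function of `(x, y)` plus `(F11 - F01 - F10 + F00) * min x y`. The cross-difference
kills the affine part and turns `min x y` into the length of `[x, x'] ∩ [y, y']`, and `t` lies in
the `x`-interval with its diagonal point in the rectangle exactly when its normalized coordinate
lies in that intersection. -/

open Set MeasureTheory

theorem min_sub_min_sub_min_add_min {u u' v v' : ℝ} (hu : u ≤ u') (hv : v ≤ v') :
    min u' v' - min u v' - min u' v + min u v = max (min u' v' - max u v) 0 := by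
  simp only [min_def, max_def]
  split_ifs <;> linarith

theorem volume_preimage_sub_div_Icc {c L : ℝ} (hL : 0 < L) (p q : ℝ) :
    volume ((fun t => (t - c) / L) ⁻¹' Icc p q) = ENNReal.ofReal (L * (q - p)) := by
  have hpre : (fun t => (t - c) / L) ⁻¹' Icc p q = Icc (c + L * p) (c + L * q) := by
    ext t
    simp only [mem_preimage, mem_Icc, le_div_iff₀ hL, div_le_iff₀ hL]
    constructor <;> rintro ⟨h₁, h₂⟩ <;> constructor <;> linarith
  rw [hpre, Real.volume_Icc]
  ring_nf

section

variable {alo ahi blo bhi : ℝ}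

theorem pwF_eq_add_mul_min (ha : alo < ahi) (hb : blo < bhi) (F00 F10 F01 F11 p q : ℝ) :
    pwF alo ahi blo bhi F00 F10 F01 F11 p q
      = F00 + (p - alo) / (ahi - alo) * (F10 - F00) + (q - blo) / (bhi - blo) * (F01 - F00)
        + (F11 - F01 - F10 + F00) * min ((p - alo) / (ahi - alo)) ((q - blo) / (bhi - blo)) := by
  have hL : 0 < ahi - alo := sub_pos.2 ha
  have hM : 0 < bhi - blo := sub_pos.2 hb
  unfold pwF
  split_ifs with h
  · rw [min_eq_right (by rw [div_le_div_iff₀ hM hL]; linarith)]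
    field_simp
    ring
  · rw [min_eq_left (by rw [div_le_div_iff₀ hL hM]; linarith)]
    field_simp
    ring

theorem le_diagLine_iff (hb : blo < bhi) (s t : ℝ) :
    s ≤ diagLine alo ahi blo bhi t ↔ (s - blo) / (bhi - blo) ≤ (t - alo) / (ahi - alo) := by
  rw [diagLine, mul_div_assoc, div_le_iff₀' (sub_pos.2 hb), ← sub_le_iff_le_add']

theorem diagLine_le_iff (hb : blo < bhi) (s t : ℝ) :
    diagLine alo ahi blo bhi t ≤ s ↔ (t - alo) / (ahi - alo) ≤ (s - blo) / (bhi - blo) := by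
  rw [diagLine, mul_div_assoc, le_div_iff₀' (sub_pos.2 hb), ← le_sub_iff_add_le']

theorem setOf_mem_Icc_diagLine_mem_Icc (ha : alo < ahi) (hb : blo < bhi) (a a' b b' : ℝ) :
    {t : ℝ | t ∈ Icc a a' ∧ b ≤ diagLine alo ahi blo bhi t ∧ diagLine alo ahi blo bhi t ≤ b'}
      = (fun t => (t - alo) / (ahi - alo)) ⁻¹'
          Icc (max ((a - alo) / (ahi - alo)) ((b - blo) / (bhi - blo)))
            (min ((a' - alo) / (ahi - alo)) ((b' - blo) / (bhi - blo))) := by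
  ext t
  simp only [mem_ofPred_eq, mem_preimage, mem_Icc, max_le_iff, le_min_iff, le_diagLine_iff hb,
    diagLine_le_iff hb, div_le_div_iff_of_pos_right (sub_pos.2 ha), sub_le_sub_iff_right]
  tauto

end

theorem crossDifference_of_piecewise_linear_general
    (alo ahi blo bhi : ℝ) (ha : alo < ahi) (hb : blo < bhi)
    (F00 F10 F01 F11 : ℝ)
    (a a' b b' : ℝ) (ha2 : a ≤ a')
    (hb2 : b ≤ b') :
    pwF alo ahi blo bhi F00 F10 F01 F11 a' b'
        - pwF alo ahi blo bhi F00 F10 F01 F11 a b'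
        - pwF alo ahi blo bhi F00 F10 F01 F11 a' b
        + pwF alo ahi blo bhi F00 F10 F01 F11 a b
      = ((F11 - F01 - F10 + F00) / (ahi - alo))
          * (MeasureTheory.volume {t : ℝ | t ∈ Set.Icc a a' ∧
              b ≤ diagLine alo ahi blo bhi t ∧ diagLine alo ahi blo bhi t ≤ b'}).toReal := by
  have hL : 0 < ahi - alo := sub_pos.2 ha
  have hu : (a - alo) / (ahi - alo) ≤ (a' - alo) / (ahi - alo) := by gcongr
  have hv : (b - blo) / (bhi - blo) ≤ (b' - blo) / (bhi - blo) := by gcongr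
  rw [setOf_mem_Icc_diagLine_mem_Icc ha hb, volume_preimage_sub_div_Icc hL,
    ENNReal.toReal_ofReal', ← mul_zero (ahi - alo), ← mul_max_of_nonneg _ _ hL.le,
    ← min_sub_min_sub_min_add_min hu hv]
  simp only [pwF_eq_add_mul_min ha hb]
  field_simp
  ring

/-- Proposition 3.2 for indicator test functions: the Lebesgue–Stieltjes measure induced by a
two-piece piecewise linear `F` is concentrated on the diagonal with uniform density in `x`:
the `F`-volume of any subrectangle equals the cross-difference density times the Lebesgue
measure of the part of the `x`-interval whose diagonal point lies in the subrectangle. -/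
theorem crossDifference_of_piecewise_linear
    (alo ahi blo bhi : ℝ) (ha : alo < ahi) (hb : blo < bhi)
    (F00 F10 F01 F11 : ℝ)
    (a a' b b' : ℝ) (ha1 : alo ≤ a) (ha2 : a ≤ a') (ha3 : a' ≤ ahi)
    (hb1 : blo ≤ b) (hb2 : b ≤ b') (hb3 : b' ≤ bhi) :
    pwF alo ahi blo bhi F00 F10 F01 F11 a' b'
        - pwF alo ahi blo bhi F00 F10 F01 F11 a b'
        - pwF alo ahi blo bhi F00 F10 F01 F11 a' b
        + pwF alo ahi blo bhi F00 F10 F01 F11 a b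
      = ((F11 - F01 - F10 + F00) / (ahi - alo))
          * (MeasureTheory.volume {t : ℝ | t ∈ Set.Icc a a' ∧
              b ≤ diagLine alo ahi blo bhi t ∧ diagLine alo ahi blo bhi t ≤ b'}).toReal :=
  crossDifference_of_piecewise_linear_general alo ahi blo bhi ha hb F00 F10 F01 F11 a a' b b' ha2
    hb2

end
end

section
/- (Hoffman's lemma for a linear inequality system under a seminorm pseudo-metric.) Let E be a real vector space, p : E → ℝ a seminorm, 𝒮 ⊆ E a convex set, Ψ : E → ℝ^M a linear map, and C ∈ ℝ^M. Define U := {u ∈ 𝒮 : Ψ(u)_l ≤ C_l for l = 1,…,M}. Suppose there exist α > 0 and u⁰ ∈ U such that Ψ(u⁰)_l ≤ C_l − α for every l = 1,…,M (Slater condition). Then for every u ∈ 𝒮, inf_{v ∈ U} p(u − v) ≤ (p(u − u⁰)/α) · ‖(Ψ(u) − C)₊‖, where (a)₊ denotes the componentwise positive part max{0,a} and ‖·‖ is the Euclidean norm on ℝ^M. -/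
/-!
Let `β` be the residual norm, so that `Ψ u l ≤ C l + β` for every `l`. Moving from `u` towards
the Slater point `u⁰` by the fraction `t = β / (α + β)` trades the excess `β` against the margin
`α`, so `v = u + t • (u⁰ - u)` satisfies all the constraints, stays in `𝒮` by convexity, and
`p (u - v) = t * p (u - u⁰) ≤ p (u - u⁰) / α * β`.
-/

open Finset

theorem le_sqrt_sum_sq_max_zero {ι : Type*} [Fintype ι] (f : ι → ℝ) (i : ι) :
    f i ≤ √(∑ j, max (f j) 0 ^ 2) :=
  calc f i ≤ max (f i) 0 := le_max_left _ _
    _ = √(max (f i) 0 ^ 2) := (Real.sqrt_sq (le_max_right _ _)).symm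
    _ ≤ √(∑ j, max (f j) 0 ^ 2) :=
      Real.sqrt_le_sqrt (single_le_sum (fun j _ => sq_nonneg (max (f j) 0)) (mem_univ i))

theorem lineMap_le_of_le_add_of_le_sub {a b c α β : ℝ} (hα : 0 < α) (hβ : 0 ≤ β)
    (ha : a ≤ c + β) (hb : b ≤ c - α) : AffineMap.lineMap a b (β / (α + β)) ≤ c := by
  set t := β / (α + β)
  have ht : t * (α + β) = β := div_mul_cancel₀ β (by positivity)
  have ht0 : 0 ≤ t := by positivity
  have ht1 : t ≤ 1 := (div_le_one (by positivity)).2 (by linarith)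
  rw [AffineMap.lineMap_apply_ring]
  nlinarith [mul_le_mul_of_nonneg_left ha (sub_nonneg.2 ht1), mul_le_mul_of_nonneg_left hb ht0]

theorem Seminorm.map_sub_lineMap {E : Type*} [AddCommGroup E] [Module ℝ E] (p : Seminorm ℝ E)
    (u w : E) {t : ℝ} (ht : 0 ≤ t) : p (u - AffineMap.lineMap u w t) = t * p (u - w) := by
  have : u - AffineMap.lineMap u w t = t • (u - w) := by
    rw [AffineMap.lineMap_apply_module']
    module
  rw [this, map_smul_eq_mul, Real.norm_of_nonneg ht]

theorem iInf_seminorm_sub_le_of_slater {E ι : Type*} [AddCommGroup E] [Module ℝ E]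
    (p : Seminorm ℝ E) {S : Set E} (hS : Convex ℝ S) (Ψ : E →ₗ[ℝ] (ι → ℝ)) (C : ι → ℝ)
    {α : ℝ} (hα : 0 < α) {u0 : E} (hu0S : u0 ∈ S) (hSlater : ∀ l, Ψ u0 l ≤ C l - α)
    {u : E} (huS : u ∈ S) {β : ℝ} (hβ : 0 ≤ β) (hres : ∀ l, Ψ u l - C l ≤ β) :
    (⨅ v : {v : E // v ∈ S ∧ ∀ l, Ψ v l ≤ C l}, p (u - (v : E))) ≤ p (u - u0) / α * β := by
  set t := β / (α + β)
  have ht0 : 0 ≤ t := by positivity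
  have ht1 : t ≤ 1 := (div_le_one (by positivity)).2 (by linarith)
  set v := AffineMap.lineMap u u0 t
  have hvS : v ∈ S := hS.lineMap_mem huS hu0S ⟨ht0, ht1⟩
  have hvC : ∀ l, Ψ v l ≤ C l := fun l => by
    rw [show Ψ v = AffineMap.lineMap (Ψ u) (Ψ u0) t from Ψ.toAffineMap.apply_lineMap u u0 t,
      AffineMap.pi_lineMap_apply]
    exact lineMap_le_of_le_add_of_le_sub hα hβ (by linarith [hres l]) (hSlater l)
  have hbdd : BddBelow (Set.range fun v : {v : E // v ∈ S ∧ ∀ l, Ψ v l ≤ C l} => p (u - v)) :=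
    ⟨0, by rintro _ ⟨w, rfl⟩; exact apply_nonneg p _⟩
  calc (⨅ v : {v : E // v ∈ S ∧ ∀ l, Ψ v l ≤ C l}, p (u - (v : E)))
      ≤ p (u - v) := ciInf_le hbdd ⟨v, hvS, hvC⟩
    _ = t * p (u - u0) := p.map_sub_lineMap u u0 ht0
    _ ≤ β / α * p (u - u0) :=
      mul_le_mul_of_nonneg_right (div_le_div_of_nonneg_left hβ hα (by linarith))
        (apply_nonneg p _)
    _ = p (u - u0) / α * β := by ring

/-- Hoffman's lemma for a linear inequality system under a seminorm pseudo-metric (Lemma 5.1 of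
the paper): under the Slater condition, the seminorm distance of any `u ∈ 𝒮` to the solution
set `U` is bounded by `p (u - u⁰) / α` times the Euclidean norm of the residual `(Ψ u − C)₊`. -/
theorem hoffman_lemma_seminorm
    {E : Type*} [AddCommGroup E] [Module ℝ E]
    (p : Seminorm ℝ E) (S : Set E) (hS : Convex ℝ S)
    (M : ℕ) (Ψ : E →ₗ[ℝ] (Fin M → ℝ)) (C : Fin M → ℝ)
    (α : ℝ) (hα : 0 < α) (u0 : E) (hu0S : u0 ∈ S)
    (hSlater : ∀ l, Ψ u0 l ≤ C l - α) :
    ∀ u ∈ S,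
      (⨅ v : {v : E // v ∈ S ∧ ∀ l, Ψ v l ≤ C l}, p (u - (v : E)))
        ≤ (p (u - u0) / α) * Real.sqrt (∑ l, max (Ψ u l - C l) 0 ^ 2) := fun _ huS =>
  iInf_seminorm_sub_le_of_slater p hS Ψ C hα hu0S hSlater huS (Real.sqrt_nonneg _)
    (le_sqrt_sum_sq_max_zero (fun l => Ψ _ l - C l))
end
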